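/- arXiv:1611.06150 — 2 statements merged into one kernel-verified Lean document; each statement's English description precedes it below -/
import Mathlib

section
/- Correctness of AKCN: Let q, m, g, d be positive integers with (2d+1)·m < q·(1 − m/g). For σ₁, σ₂ ∈ ℤ_q with |σ₁ − σ₂|_q ≤ d and any k₁ ∈ ℤ_m, define v = ⌊g·(σ₁ + ⌊k₁·q/m⌉)/q⌉ mod g and k₂ = ⌊m·(v/g − σ₂/q)⌉ mod m. Then k₂ = k₁. -/
/-!
Write `r₁ = ⌊k₁ q / m⌉`, `v₀ = ⌊g (σ₁ + r₁) / q⌉ = g t + v` and `σ₁ - σ₂ = δ + q N`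
with `|δ| ≤ d`. Then `m (v / g - σ₂ / q) - (k₁ + m (N - t))` telescopes into three
errors, of sizes at most `m d / q` (the noise `δ`), `m / (2q)` and `m / (2g)` (the two
roundings), and the hypothesis on `q, m, g, d` says exactly that their sum is below `1/2`.
Rounding therefore recovers `k₁ + m (N - t)`, which is `k₁` modulo `m`.
-/

theorem round_eq_of_abs_sub_lt_half {x : ℝ} {n : ℤ} (h : |x - n| < 1 / 2) : round x = n := by
  obtain ⟨hlo, hhi⟩ := abs_lt.mp h
  exact round_eq_iff.mpr ⟨by linarith, by linarith⟩

theorem round_emod_eq_of_abs_sub_lt_half {x : ℝ} {k m M : ℤ} (hk₀ : 0 ≤ k) (hkm : k < m)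
    (h : |x - ((k + m * M : ℤ) : ℝ)| < 1 / 2) : round x % m = k := by
  rw [round_eq_of_abs_sub_lt_half h, Int.add_mul_emod_self_left, Int.emod_eq_of_lt hk₀ hkm]

theorem abs_mul_le_mul_of_abs_le {c x b : ℝ} (hc : 0 ≤ c) (h : |x| ≤ b) :
    |c * x| ≤ c * b := by
  rw [abs_mul, abs_of_nonneg hc]
  exact mul_le_mul_of_nonneg_left h hc

theorem abs_mul_round_sub_le {c : ℝ} (hc : 0 ≤ c) (x : ℝ) :
    |c * (round x - x)| ≤ c * (1 / 2) :=
  abs_mul_le_mul_of_abs_le hc (abs_sub_comm x (round x) ▸ abs_sub_round x)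

theorem Nat.pos_of_lt_cast_mul {q : ℕ} {a b : ℝ} (ha : 0 ≤ a) (h : a < q * b) : 0 < q :=
  Nat.pos_of_ne_zero fun hq => by
    subst hq
    rw [Nat.cast_zero, zero_mul] at h
    linarith

theorem Int.exists_eq_add_mul_abs_le_of_min_emod_le {x q d : ℤ} (hq : 0 < q)
    (h : min (x % q) (q - x % q) ≤ d) : ∃ δ N : ℤ, x = δ + q * N ∧ |δ| ≤ d := by
  have hr₀ : 0 ≤ x % q := Int.emod_nonneg x hq.ne'
  have hdecomp : x = x % q + q * (x / q) := (Int.emod_add_mul_ediv x q).symm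
  rcases le_total (x % q) (q - x % q) with hle | hle
  · refine ⟨x % q, x / q, hdecomp, ?_⟩
    rw [abs_of_nonneg hr₀]
    exact min_eq_left hle ▸ h
  · refine ⟨x % q - q, x / q + 1, by linarith, ?_⟩
    rw [abs_of_nonpos (by linarith [Int.emod_lt_of_pos x hq])]
    linarith [min_eq_right hle ▸ h]

theorem add_add_lt_half_of_mul_lt {q m g d : ℝ} (hq : 0 < q)
    (h : (2 * d + 1) * m < q * (1 - m / g)) :
    m / q * d + m / q * (1 / 2) + m / g * (1 / 2) < 1 / 2 := by
  have h' : (2 * d + 1) * m / q < 1 - m / g := by rwa [div_lt_iff₀' hq]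
  have hsplit : m / q * d + m / q * (1 / 2) = (2 * d + 1) * m / q / 2 := by ring
  linarith

theorem akcn_residual_eq {q m g : ℝ} (hq : q ≠ 0) (hm : m ≠ 0) (hg : g ≠ 0)
    (σ₁ σ₂ k₁ δ N r₁ v₀ t : ℝ) (hσ : σ₁ - σ₂ = δ + q * N) :
    m * ((v₀ - g * t) / g - σ₂ / q) - (k₁ + m * (N - t)) =
      m / q * δ + m / q * (r₁ - k₁ * q / m) + m / g * (v₀ - g * (σ₁ + r₁) / q) := by
  have hσ₂ : σ₂ = σ₁ - δ - q * N := by linarith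
  subst hσ₂
  field_simp
  ring

theorem stmt_6_general (q m g d : ℕ) (hg : 0 < g)
    (hcon : ((2 * d + 1) * m : ℝ) < (q : ℝ) * (1 - (m : ℝ) / (g : ℝ)))
    (σ₁ σ₂ k₁ : ℤ)
    (hk₁ : 0 ≤ k₁ ∧ k₁ < (m : ℤ))
    (hdist : min ((σ₁ - σ₂) % (q : ℤ)) ((q : ℤ) - (σ₁ - σ₂) % (q : ℤ)) ≤ (d : ℤ))
    (v k₂ : ℤ)
    (hv : v = round ((g : ℝ) * ((σ₁ : ℝ) +
        ((round ((k₁ : ℝ) * (q : ℝ) / (m : ℝ)) : ℤ) : ℝ)) / (q : ℝ)) % (g : ℤ))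
    (hk₂ : k₂ = round ((m : ℝ) * ((v : ℝ) / (g : ℝ) - (σ₂ : ℝ) / (q : ℝ))) % (m : ℤ)) :
    k₂ = k₁ := by
  obtain ⟨hk₀, hkm⟩ := hk₁
  have hm : 0 < m := by omega
  have hq : 0 < q := Nat.pos_of_lt_cast_mul (by positivity) hcon
  obtain ⟨δ, N, hσ, hδ⟩ := Int.exists_eq_add_mul_abs_le_of_min_emod_le (by omega) hdist
  set r₁ := round ((k₁ : ℝ) * q / m)
  set v₀ := round ((g : ℝ) * (σ₁ + r₁) / q)
  have hv₀ : (v : ℝ) = v₀ - g * (v₀ / (g : ℤ) : ℤ) := by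
    rw [hv, Int.emod_def]; push_cast; ring
  rw [hk₂]
  refine round_emod_eq_of_abs_sub_lt_half (M := N - v₀ / (g : ℤ)) hk₀ hkm ?_
  have hmq : (0 : ℝ) ≤ m / q := by positivity
  have hmg : (0 : ℝ) ≤ m / g := by positivity
  have hnoise : |(m / q : ℝ) * δ| ≤ m / q * d :=
    abs_mul_le_mul_of_abs_le hmq (by exact_mod_cast hδ)
  calc |(m : ℝ) * (v / g - σ₂ / q) - ((k₁ + m * (N - v₀ / (g : ℤ)) : ℤ) : ℝ)|
      = |(m / q : ℝ) * δ + m / q * (r₁ - k₁ * q / m) +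
          m / g * (v₀ - g * (σ₁ + r₁) / q)| := by
        rw [hv₀]; push_cast
        exact congrArg abs (akcn_residual_eq (by positivity) (by positivity) (by positivity)
          _ _ _ _ _ _ _ _ (by exact_mod_cast hσ))
    _ ≤ m / q * d + m / q * (1 / 2) + m / g * (1 / 2) := by
        have hr₁ : |(m / q : ℝ) * (r₁ - k₁ * q / m)| ≤ m / q * (1 / 2) :=
          abs_mul_round_sub_le hmq _
        have hr₂ : |(m / g : ℝ) * (v₀ - g * (σ₁ + r₁) / q)| ≤ m / g * (1 / 2) :=
          abs_mul_round_sub_le hmg _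
        linarith [abs_add_three ((m / q : ℝ) * δ) (m / q * (r₁ - k₁ * q / m))
          (m / g * (v₀ - g * (σ₁ + r₁) / q))]
    _ < 1 / 2 := add_add_lt_half_of_mul_lt (by positivity) hcon

/-- Correctness of AKCN. -/
theorem stmt_6 (q m g d : ℕ) (hq : 0 < q) (hm : 0 < m) (hg : 0 < g)
    (hcon : ((2 * d + 1) * m : ℝ) < (q : ℝ) * (1 - (m : ℝ) / (g : ℝ)))
    (σ₁ σ₂ k₁ : ℤ)
    (h1 : 0 ≤ σ₁ ∧ σ₁ < (q : ℤ)) (h2 : 0 ≤ σ₂ ∧ σ₂ < (q : ℤ))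
    (hk₁ : 0 ≤ k₁ ∧ k₁ < (m : ℤ))
    (hdist : min ((σ₁ - σ₂) % (q : ℤ)) ((q : ℤ) - (σ₁ - σ₂) % (q : ℤ)) ≤ (d : ℤ))
    (v k₂ : ℤ)
    (hv : v = round ((g : ℝ) * ((σ₁ : ℝ) +
        ((round ((k₁ : ℝ) * (q : ℝ) / (m : ℝ)) : ℤ) : ℝ)) / (q : ℝ)) % (g : ℤ))
    (hk₂ : k₂ = round ((m : ℝ) * ((v : ℝ) / (g : ℝ) - (σ₂ : ℝ) / (q : ℝ))) % (m : ℤ)) :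
    k₂ = k₁ :=
  stmt_6_general q m g d hg hcon σ₁ σ₂ k₁ hk₁ hdist v k₂ hv hk₂
end

section
/- Efficiency upper bound for key consensus: Let (Con, Rec) be a correct and secure KC scheme with parameters (q, m, g, d), where m ≥ 2: correctness means for all σ₁, σ₂ ∈ ℤ_q with |σ₁ − σ₂|_q ≤ d and any output (k₁, v) of Con(σ₁), Rec(σ₂, v) = k₁; security means when σ₁ is uniform over ℤ_q, the key k₁ is uniform over ℤ_m and independent of the signal v. Then 2·m·d ≤ q·(1 − 1/g). -/
/-!
Fix a coin `r₀`. By pigeonhole, some signal `v` is output by `Con (·, r₀)` on at least `q / g`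
values of `σ₁`. Security forces every key `k` to occur together with `v`, say on a nonempty set
`S_k ⊆ ℤ_q`, and correctness forces `Rec (·, v) = k` on the `d`-neighbourhood of `S_k`. As
`Rec (·, v)` takes every key, each of its fibres is a proper subset of the cycle containing the
`d`-neighbourhood of `S_k`, so it has at least `|S_k| + 2d` points. Summing over the `m` keys gives
`q / g + 2md ≤ ∑ₖ |S_k| + 2md ≤ q`.
-/

open Finset

theorem Int.card_add_two_mul_le_of_nbhd_subset {A B : Finset ℤ} {d : ℕ} (hA : A.Nonempty)
    (hB : ∀ a ∈ A, ∀ u : ℤ, |u - a| ≤ d → u ∈ B) : #A + 2 * d ≤ #B := by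
  set a := A.min' hA
  set b := A.max' hA
  have hsub : Ico (a - d) a ∪ A ∪ Ioc b (b + d) ⊆ B := by
    intro u hu
    simp only [mem_union, mem_Ico, mem_Ioc] at hu
    rcases hu with (hu | hu) | hu
    · exact hB a (A.min'_mem hA) u (by rw [abs_le]; omega)
    · exact hB u hu u (by simp)
    · exact hB b (A.max'_mem hA) u (by rw [abs_le]; omega)
  have hdisj₁ : Disjoint (Ico (a - d) a) A := disjoint_left.2 fun u hu huA => by
    have := A.min'_le u huA
    rw [mem_Ico] at hu
    omega
  have hdisj₂ : Disjoint (Ico (a - d) a ∪ A) (Ioc b (b + d)) := disjoint_left.2 fun u hu hu' => by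
    rw [mem_Ioc] at hu'
    rcases mem_union.1 hu with hu | hu
    · have := A.min'_le_max' hA
      rw [mem_Ico] at hu
      omega
    · have := A.le_max' u hu
      omega
  calc #A + 2 * d = #(Ico (a - d) a ∪ A ∪ Ioc b (b + d)) := by
        rw [card_union_of_disjoint hdisj₂, card_union_of_disjoint hdisj₁, Int.card_Ico,
          Int.card_Ioc]
        omega
    _ ≤ #B := card_le_card hsub

theorem ZMod.natAbs_valMinAbs_sub_le {q : ℕ} [NeZero q] (x s y : ZMod q) :
    ((s - y).valMinAbs.natAbs : ℤ) ≤ |((s - x).val : ℤ) - (y - x).val| := by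
  have h := ZMod.natAbs_min_of_le_div_two q (s - y).valMinAbs (((s - x).val : ℤ) - (y - x).val)
    (by push_cast; simp) (ZMod.natAbs_valMinAbs_le _)
  rw [Int.abs_eq_natAbs]
  exact_mod_cast h

theorem ZMod.card_add_two_mul_le_of_nbhd_subset {q d : ℕ} [NeZero q] {S N : Finset (ZMod q)}
    (hS : S.Nonempty) (hN : ∀ s ∈ S, ∀ y, (s - y).valMinAbs.natAbs ≤ d → y ∈ N) {x : ZMod q}
    (hx : x ∉ N) : #S + 2 * d ≤ #N := by
  -- Cutting the cycle open at `x` turns the neighbourhoods of points of `S` into intervals of `ℤ`.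
  set t : ZMod q → ℤ := fun y => (y - x).val
  have ht : Function.Injective t := fun a b h =>
    sub_left_injective (b := x) (ZMod.val_injective q (Nat.cast_inj.1 h))
  have hfar : ∀ s ∈ S, d < t s ∧ t s + d < q := by
    intro s hs
    have := mt (hN s hs x) hx
    simp only [t]
    rw [ZMod.valMinAbs_natAbs_eq_min, not_le, lt_min_iff] at this
    have := (s - x).val_lt
    omega
  have key := Int.card_add_two_mul_le_of_nbhd_subset (hS.image t) (B := N.image t) (d := d) ?_
  · rwa [card_image_of_injective _ ht, card_image_of_injective _ ht] at key
  simp only [forall_mem_image]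
  intro s hs u hu
  obtain ⟨h1, h2⟩ := hfar s hs
  lift u to ℕ using (by linarith [(abs_le.1 hu).1])
  have hty : t (x + u) = u := by
    have := abs_le.1 hu
    simp only [t, add_sub_cancel_left, ZMod.val_natCast_of_lt (show u < q by omega)]
  refine mem_image.2 ⟨x + u, hN s hs _ ?_, hty⟩
  have : _ ≤ |t s - t (x + u)| := ZMod.natAbs_valMinAbs_sub_le x s (x + u)
  rw [hty, abs_sub_comm] at this
  exact_mod_cast this.trans hu

def cyclicDist {q : ℕ} (a b : Fin q) : ℤ :=
  min (((a.val : ℤ) - (b.val : ℤ)) % (q : ℤ)) ((q : ℤ) - ((a.val : ℤ) - (b.val : ℤ)) % (q : ℤ))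

@[simp]
theorem cyclicDist_self {q : ℕ} (a : Fin q) : cyclicDist a a = 0 := by
  simp [cyclicDist]

theorem cyclicDist_eq_natAbs_valMinAbs {q : ℕ} [NeZero q] (a b : Fin q) :
    cyclicDist a b = ((a.val : ZMod q) - (b.val : ZMod q)).valMinAbs.natAbs := by
  have hv : ((((a.val : ZMod q) - (b.val : ZMod q)).val : ℕ) : ℤ) = ((a.val : ℤ) - b.val) % q := by
    rw [← ZMod.val_intCast]
    push_cast
    rfl
  have := ZMod.val_lt ((a.val : ZMod q) - (b.val : ZMod q))
  rw [ZMod.valMinAbs_natAbs_eq_min, cyclicDist, ← hv]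
  omega

theorem Fin.card_add_two_mul_le_of_nbhd_subset {q d : ℕ} [NeZero q] {S N : Finset (Fin q)}
    (hS : S.Nonempty) (hN : ∀ s ∈ S, ∀ y, cyclicDist s y ≤ d → y ∈ N) {x : Fin q}
    (hx : x ∉ N) : #S + 2 * d ≤ #N := by
  set ι : Fin q → ZMod q := fun σ => σ.val
  have hι : Function.Injective ι := fun a b h => Fin.ext <| by
    simpa [ι, ZMod.val_natCast_of_lt a.isLt, ZMod.val_natCast_of_lt b.isLt] using
      congrArg ZMod.val h
  have key := ZMod.card_add_two_mul_le_of_nbhd_subset (hS.image ι) (N := N.image ι) (d := d) ?_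
    (x := ι x) (by rwa [hι.mem_finset_image])
  · rwa [card_image_of_injective _ hι, card_image_of_injective _ hι] at key
  simp only [forall_mem_image]
  intro s hs y hy
  have hιy : ι ⟨y.val, y.val_lt⟩ = y := ZMod.natCast_zmod_val y
  rw [← hιy] at hy ⊢
  refine mem_image_of_mem ι (hN s hs _ ?_)
  rw [cyclicDist_eq_natAbs_valMinAbs]
  exact Int.ofNat_le.2 hy

theorem Fin.sum_card_add_two_mul_le_of_nbhd_subset {q d : ℕ} [NeZero q] {K : Type*} [Fintype K]
    [Nontrivial K] [DecidableEq K] (f : Fin q → K) (S : K → Finset (Fin q))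
    (hS : ∀ k, (S k).Nonempty) (hf : ∀ k, ∀ s ∈ S k, ∀ y, cyclicDist s y ≤ d → f y = k) :
    ∑ k, #(S k) + 2 * d * Fintype.card K ≤ q := by
  have hfiber (k : K) : #(S k) + 2 * d ≤ #{y | f y = k} := by
    obtain ⟨k', hk'⟩ := exists_ne k
    obtain ⟨x, hx⟩ := hS k'
    refine Fin.card_add_two_mul_le_of_nbhd_subset (hS k) (fun s hs y hy => ?_) (x := x) ?_
    · simpa using hf k s hs y hy
    · simpa [hf k' x hx x (by simp)] using hk'
  calc ∑ k, #(S k) + 2 * d * Fintype.card K = ∑ k, (#(S k) + 2 * d) := by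
        rw [sum_add_distrib, Finset.sum_const, card_univ, smul_eq_mul, mul_comm (Fintype.card K)]
    _ ≤ ∑ k, #{y | f y = k} := sum_le_sum fun k _ => hfiber k
    _ = q := by
      rw [← card_eq_sum_card_fiberwise (fun _ _ => mem_univ _), card_univ, Fintype.card_fin]

section KeyConsensus

variable {q m g : ℕ} {R : Type*} [Fintype R] (Con : Fin q → R → Fin m × Fin g)

def keySupport (v : Fin g) (k : Fin m) : Finset (Fin q) := {σ | ∃ r, Con σ r = (k, v)}

theorem exists_div_le_sum_card_keySupport [Nonempty R] [NeZero g] :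
    ∃ v, (q : ℝ) / g ≤ ∑ k, #(keySupport Con v k) := by
  let r₀ := Classical.arbitrary R
  obtain ⟨v, hv⟩ := Fintype.exists_le_card_fiber_of_nsmul_le_card (fun σ => (Con σ r₀).2)
    (b := (q : ℝ) / g) (by simp [mul_div_cancel₀ _ (NeZero.ne (g : ℝ))])
  refine ⟨v, hv.trans ?_⟩
  have hsub : ({σ | (Con σ r₀).2 = v} : Finset (Fin q)) ⊆ univ.biUnion (keySupport Con v) :=
    fun σ hσ => by
      simp only [mem_filter, mem_univ, true_and] at hσ
      exact mem_biUnion.2 ⟨(Con σ r₀).1, mem_univ _, by simp [keySupport, ← hσ]⟩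
  exact_mod_cast (card_le_card hsub).trans card_biUnion_le

theorem keySupport_nonempty_of_secure
    (hsec_uniform : ∀ k : Fin m, #{p : Fin q × R | (Con p.1 p.2).1 = k} * m = q * Fintype.card R)
    (hsec_indep : ∀ (k : Fin m) (v : Fin g),
      #{p : Fin q × R | Con p.1 p.2 = (k, v)} * (q * Fintype.card R) =
        #{p : Fin q × R | (Con p.1 p.2).1 = k} * #{p : Fin q × R | (Con p.1 p.2).2 = v})
    {v : Fin g} (hv : ∃ k, (keySupport Con v k).Nonempty) (k : Fin m) :
    (keySupport Con v k).Nonempty := by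
  obtain ⟨k₀, σ₀, hσ₀⟩ := hv
  obtain ⟨r₀, hr₀⟩ : ∃ r, Con σ₀ r = (k₀, v) := by simpa [keySupport] using hσ₀
  have hqR : 0 < q * Fintype.card R := Nat.mul_pos (Fin.pos σ₀) (Fintype.card_pos_iff.2 ⟨r₀⟩)
  have hk_pos : 0 < #{p : Fin q × R | (Con p.1 p.2).1 = k} :=
    Nat.pos_of_mul_pos_right ((hsec_uniform k).symm ▸ hqR)
  have hv_pos : 0 < #{p : Fin q × R | (Con p.1 p.2).2 = v} :=
    card_pos.2 ⟨(σ₀, r₀), by simp [hr₀]⟩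
  have hkv : 0 < #{p : Fin q × R | Con p.1 p.2 = (k, v)} :=
    Nat.pos_of_mul_pos_right ((hsec_indep k v).symm ▸ Nat.mul_pos hk_pos hv_pos)
  obtain ⟨p, hp⟩ := card_pos.1 hkv
  exact ⟨p.1, by simpa [keySupport] using ⟨p.2, (mem_filter.1 hp).2⟩⟩

theorem rec_eq_of_mem_keySupport {d : ℕ} {Rec : Fin q → Fin g → Fin m}
    (hcorrect : ∀ σ₁ σ₂ r, cyclicDist σ₁ σ₂ ≤ d → Rec σ₂ (Con σ₁ r).2 = (Con σ₁ r).1)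
    {v : Fin g} {k : Fin m} {σ : Fin q} (hσ : σ ∈ keySupport Con v k) {y : Fin q}
    (hy : cyclicDist σ y ≤ d) : Rec y v = k := by
  obtain ⟨r, hr⟩ : ∃ r, Con σ r = (k, v) := by simpa [keySupport] using hσ
  simpa [hr] using hcorrect σ y r hy

end KeyConsensus

theorem stmt_12_general (q m g d : ℕ) (hm : 2 ≤ m) (hg : 2 ≤ g)
    (hmq : m ≤ q)
    (R : Type) [Fintype R] [Nonempty R]
    (Con : Fin q → R → Fin m × Fin g) (Rec : Fin q → Fin g → Fin m)
    (hcorrect : ∀ (σ₁ σ₂ : Fin q) (r : R),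
      min (((σ₁.val : ℤ) - (σ₂.val : ℤ)) % (q : ℤ))
          ((q : ℤ) - ((σ₁.val : ℤ) - (σ₂.val : ℤ)) % (q : ℤ)) ≤ (d : ℤ) →
      Rec σ₂ (Con σ₁ r).2 = (Con σ₁ r).1)
    (hsec_uniform : ∀ k : Fin m,
      ((Finset.univ : Finset (Fin q × R)).filter
        (fun p => (Con p.1 p.2).1 = k)).card * m = q * Fintype.card R)
    (hsec_indep : ∀ (k : Fin m) (v : Fin g),
      ((Finset.univ : Finset (Fin q × R)).filter
        (fun p => Con p.1 p.2 = (k, v))).card * (q * Fintype.card R) =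
      ((Finset.univ : Finset (Fin q × R)).filter
        (fun p => (Con p.1 p.2).1 = k)).card *
      ((Finset.univ : Finset (Fin q × R)).filter
        (fun p => (Con p.1 p.2).2 = v)).card) :
    (2 * m * d : ℝ) ≤ (q : ℝ) * (1 - 1 / (g : ℝ)) := by
  have : NeZero q := ⟨by omega⟩
  have : NeZero g := ⟨by omega⟩
  have : Nontrivial (Fin m) := Fin.nontrivial_iff_two_le.2 hm
  obtain ⟨v, hv⟩ := exists_div_le_sum_card_keySupport Con
  have hsupp : ∀ k, (keySupport Con v k).Nonempty := by
    refine keySupport_nonempty_of_secure Con hsec_uniform hsec_indep ?_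
    by_contra! hempty
    have : (0 : ℝ) < q / g := div_pos (Nat.cast_pos.2 (by omega)) (by positivity)
    simp [hempty] at hv
    linarith
  have hbound := Fin.sum_card_add_two_mul_le_of_nbhd_subset (d := d) (fun σ => Rec σ v)
    (keySupport Con v) hsupp fun _ _ hs _ hy => rec_eq_of_mem_keySupport Con hcorrect hs hy
  rw [Fintype.card_fin] at hbound
  have hbound' : (∑ k, #(keySupport Con v k) : ℝ) + 2 * d * m ≤ q := by exact_mod_cast hbound
  push_cast at hv
  rw [mul_one_sub, mul_one_div]
  linarith

/-- Efficiency upper bound for key consensus: any correct and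
secure KC scheme with parameters (q,m,g,d) satisfies 2·m·d ≤ q·(1 − 1/g).
The probabilistic Con is modelled with a finite nonempty coin set R and
uniform coins; security (key uniform over ℤ_m and independent of the signal
when σ₁ is uniform) is expressed by counting over ℤ_q × R. -/
theorem stmt_12 (q m g d : ℕ) (hm : 2 ≤ m) (hg : 2 ≤ g)
    (hmq : m ≤ q) (hgq : g ≤ q) (hd : d ≤ q / 2)
    (R : Type) [Fintype R] [Nonempty R]
    (Con : Fin q → R → Fin m × Fin g) (Rec : Fin q → Fin g → Fin m)
    (hcorrect : ∀ (σ₁ σ₂ : Fin q) (r : R),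
      min (((σ₁.val : ℤ) - (σ₂.val : ℤ)) % (q : ℤ))
          ((q : ℤ) - ((σ₁.val : ℤ) - (σ₂.val : ℤ)) % (q : ℤ)) ≤ (d : ℤ) →
      Rec σ₂ (Con σ₁ r).2 = (Con σ₁ r).1)
    (hsec_uniform : ∀ k : Fin m,
      ((Finset.univ : Finset (Fin q × R)).filter
        (fun p => (Con p.1 p.2).1 = k)).card * m = q * Fintype.card R)
    (hsec_indep : ∀ (k : Fin m) (v : Fin g),
      ((Finset.univ : Finset (Fin q × R)).filter
        (fun p => Con p.1 p.2 = (k, v))).card * (q * Fintype.card R) =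
      ((Finset.univ : Finset (Fin q × R)).filter
        (fun p => (Con p.1 p.2).1 = k)).card *
      ((Finset.univ : Finset (Fin q × R)).filter
        (fun p => (Con p.1 p.2).2 = v)).card) :
    (2 * m * d : ℝ) ≤ (q : ℝ) * (1 - 1 / (g : ℝ)) :=
  stmt_12_general q m g d hm hg hmq R Con Rec hcorrect hsec_uniform hsec_indep
end
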